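/- arXiv:2111.03983 — 4 statements merged into one kernel-verified Lean document; each statement's English description precedes it below -/
import Mathlib

section
/- If S is the standard middle-thirds Cantor set in [0,1], then the difference set S − S = {a − b : a, b ∈ S} equals the interval [−1, 1]. -/
/-!
Every level `Pₙ` of the Cantor construction satisfies `Pₙ - Pₙ ⊇ [-1, 1]`: since
`Pₙ₊₁ = Pₙ / 3 ∪ (2 + Pₙ) / 3`, the difference set `Pₙ₊₁ - Pₙ₊₁` contains the three
thirds `(Pₙ - Pₙ - 2) / 3`, `(Pₙ - Pₙ) / 3` and `(Pₙ - Pₙ + 2) / 3`, which cover `[-1, 1]`.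
Taking differences commutes with decreasing intersections of compact sets, because the
fibres of `(a, b) ↦ a - b` over the levels form a decreasing sequence of nonempty compact sets.
-/

open Set Pointwise

theorem Set.image_iInter_of_directed_isCompact {ι X Y : Type*} [Nonempty ι]
    [TopologicalSpace X] [T2Space X] [TopologicalSpace Y] [T1Space Y]
    {K : ι → Set X} (hd : Directed (· ⊇ ·) K) (hK : ∀ i, IsCompact (K i))
    {f : X → Y} (hf : Continuous f) :
    f '' ⋂ i, K i = ⋂ i, f '' K i := by
  refine (image_iInter_subset K f).antisymm fun y hy ↦ ?_
  have hfiber : (⋂ i, K i ∩ f ⁻¹' {y}).Nonempty := by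
    refine IsCompact.nonempty_iInter_of_directed_nonempty_isCompact_isClosed _
      (hd.mono_comp (· ⊇ ·) (g := (· ∩ f ⁻¹' {y})) fun _ _ h ↦ inter_subset_inter_left _ h)
      (fun i ↦ ?_)
      (fun i ↦ (hK i).inter_right (isClosed_singleton.preimage hf))
      (fun i ↦ (hK i).isClosed.inter (isClosed_singleton.preimage hf))
    obtain ⟨x, hx, rfl⟩ := mem_iInter.mp hy i
    exact ⟨x, hx, rfl⟩
  obtain ⟨x, hx⟩ := hfiber
  simp only [mem_iInter, mem_inter_iff, mem_preimage, mem_singleton_iff] at hx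
  exact ⟨x, mem_iInter.mpr fun i ↦ (hx i).1, (hx (Classical.arbitrary ι)).2⟩

theorem Set.iInter_sub_iInter_of_directed_isCompact {ι G : Type*} [Nonempty ι]
    [TopologicalSpace G] [T2Space G] [Sub G] [ContinuousSub G]
    {K : ι → Set G} (hd : Directed (· ⊇ ·) K) (hK : ∀ i, IsCompact (K i)) :
    (⋂ i, K i) - ⋂ i, K i = ⋂ i, (K i - K i) := by
  have hprod : (⋂ i, K i) ×ˢ (⋂ i, K i) = ⋂ i, K i ×ˢ K i := by
    ext; simp only [mem_prod, mem_iInter, forall_and]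
  simp only [← image2_sub, ← image_prod, hprod]
  exact image_iInter_of_directed_isCompact
    (hd.mono_comp (· ⊇ ·) (g := fun s ↦ s ×ˢ s) fun _ _ h ↦ prod_mono h h)
    (fun i ↦ (hK i).prod (hK i)) continuous_sub

theorem div_three_mem_preCantorSet_succ {x : ℝ} {n : ℕ} (hx : x ∈ preCantorSet n) :
    x / 3 ∈ preCantorSet (n + 1) :=
  Or.inl ⟨x, hx, rfl⟩

theorem two_add_div_three_mem_preCantorSet_succ {x : ℝ} {n : ℕ} (hx : x ∈ preCantorSet n) :
    (2 + x) / 3 ∈ preCantorSet (n + 1) :=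
  Or.inr ⟨x, hx, rfl⟩

theorem Icc_subset_preCantorSet_sub_preCantorSet (n : ℕ) :
    Icc (-1 : ℝ) 1 ⊆ preCantorSet n - preCantorSet n := by
  induction n with
  | zero =>
    intro d ⟨hd₀, hd₁⟩
    rcases le_total d 0 with hd | hd
    · exact ⟨0, ⟨le_rfl, zero_le_one⟩, -d, ⟨by linarith, by linarith⟩, by ring⟩
    · exact ⟨d, ⟨hd, hd₁⟩, 0, ⟨le_rfl, zero_le_one⟩, sub_zero d⟩
  | succ n ih =>
    intro d ⟨hd₀, hd₁⟩
    rcases le_total d (-1 / 3) with hd | hd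
    · obtain ⟨a, ha, b, hb, hab⟩ := ih ⟨by linarith, by linarith⟩ (a := 3 * d + 2)
      exact ⟨a / 3, div_three_mem_preCantorSet_succ ha,
        (2 + b) / 3, two_add_div_three_mem_preCantorSet_succ hb, by linarith⟩
    rcases le_total d (1 / 3) with hd' | hd'
    · obtain ⟨a, ha, b, hb, hab⟩ := ih ⟨by linarith, by linarith⟩ (a := 3 * d)
      exact ⟨a / 3, div_three_mem_preCantorSet_succ ha,
        b / 3, div_three_mem_preCantorSet_succ hb, by linarith⟩
    · obtain ⟨a, ha, b, hb, hab⟩ := ih ⟨by linarith, by linarith⟩ (a := 3 * d - 2)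
      exact ⟨(2 + a) / 3, two_add_div_three_mem_preCantorSet_succ ha,
        b / 3, div_three_mem_preCantorSet_succ hb, by linarith⟩

theorem cantorSet_sub_cantorSet_eq_iInter :
    cantorSet - cantorSet = ⋂ n, (preCantorSet n - preCantorSet n) :=
  iInter_sub_iInter_of_directed_isCompact preCantorSet_antitone.directed_ge
    fun n ↦ isCompact_Icc.of_isClosed_subset (isClosed_preCantorSet n)
      preCantorSet_subset_unitInterval

/-- The difference set `S − S = {a − b : a, b ∈ S}` of the standard middle-thirds
Cantor set `S ⊂ [0,1]` equals the interval `[−1, 1]`. -/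
theorem cantorSet_sub_cantorSet_eq_Icc :
    {d : ℝ | ∃ a ∈ cantorSet, ∃ b ∈ cantorSet, d = a - b} = Set.Icc (-1 : ℝ) 1 := by
  have hsub : {d : ℝ | ∃ a ∈ cantorSet, ∃ b ∈ cantorSet, d = a - b} = cantorSet - cantorSet := by
    ext d; simp only [mem_ofPred_eq, mem_sub, eq_comm]
  rw [hsub]
  refine subset_antisymm ?_ ?_
  · rintro _ ⟨a, ha, b, hb, rfl⟩
    obtain ⟨ha₀, ha₁⟩ := cantorSet_subset_unitInterval ha
    obtain ⟨hb₀, hb₁⟩ := cantorSet_subset_unitInterval hb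
    exact ⟨by linarith, by linarith⟩
  · rw [cantorSet_sub_cantorSet_eq_iInter]
    exact subset_iInter Icc_subset_preCantorSet_sub_preCantorSet
end

section
/- Let C be a finite-dimensional Λ-vector space with generators x_1,…,x_n having actions A(x_i) that are pairwise distinct modulo a subgroup Γ ⊂ ℝ containing all exponents of Λ^Γ. For a nonzero ξ ∈ C write ξ = f T^a x + (lower action terms) with f ≠ 0; then the leading action term T^a x is unique. Moreover, a finite set of nonzero vectors ξ_1,…,ξ_m is orthogonal if and only if their leading generators x (the basis elements appearing in the leading action terms) are pairwise distinct. -/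
open Finset Classical
noncomputable section

/-- The Novikov valuation `ν(λ) = min{a_j : f_j ≠ 0}`. -/
noncomputable def nu {F : Type*} [Field F] (l : HahnSeries ℝ F) : ℝ := l.order

/-- A series lies in `Λ^Γ` iff all its exponents lie in the subgroup `Γ ⊂ ℝ`. -/
def InGamma {F : Type*} [Field F] (Γ : AddSubgroup ℝ) (l : HahnSeries ℝ F) : Prop :=
  l.support ⊆ (Γ : Set ℝ)

/-- The action `A(∑ λᵢ xᵢ) = maxᵢ (A(xᵢ) − ν(λᵢ))` on `C = ⊕ᵢ Λ xᵢ`. -/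
noncomputable def act {F : Type*} [Field F] {ι : Type*} [Fintype ι]
    (Ax : ι → ℝ) (c : ι → HahnSeries ℝ F) : WithBot ℝ :=
  Finset.univ.sup fun i => if c i = 0 then (⊥ : WithBot ℝ) else ((Ax i - nu (c i) : ℝ) : WithBot ℝ)

/-- `A(λ x) = A(x) − ν(λ)` for `λ ≠ 0`, extended by `A(0) = ⊥`. -/
noncomputable def scaledAct {F : Type*} [Field F] {ι : Type*} [Fintype ι]
    (Ax : ι → ℝ) (l : HahnSeries ℝ F) (v : ι → HahnSeries ℝ F) : WithBot ℝ :=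
  if l = 0 then ⊥ else WithBot.map (fun t => t - nu l) (act Ax v)

/-- `i` is the generator of the leading action term `f T^{ν(ξᵢ)} xᵢ` of `ξ`:
`ξᵢ ≠ 0` and `A(ξ) = A(xᵢ) − ν(ξᵢ)`. -/
def IsLeadIdx {F : Type*} [Field F] {ι : Type*} [Fintype ι]
    (Ax : ι → ℝ) (ξ : ι → HahnSeries ℝ F) (i : ι) : Prop :=
  ξ i ≠ 0 ∧ act Ax ξ = ((Ax i - nu (ξ i) : ℝ) : WithBot ℝ)

/-- Orthogonality over `Λ^Γ`: `A(∑ λᵢ ξᵢ) = maxᵢ (A(ξᵢ) − ν(λᵢ))` for all coefficients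
`λᵢ ∈ Λ^Γ`. -/
def OrthogonalGamma {F : Type*} [Field F] {ι : Type*} [Fintype ι] {κ : Type*} [Fintype κ]
    (Γ : AddSubgroup ℝ) (Ax : ι → ℝ) (ξ : κ → ι → HahnSeries ℝ F) : Prop :=
  ∀ l : κ → HahnSeries ℝ F, (∀ j, InGamma Γ (l j)) →
    act Ax (∑ j, l j • ξ j) = Finset.univ.sup fun j => scaledAct Ax (l j) (ξ j)

/-!
Since `ν(ξᵢ) ∈ Γ`, two coordinates of `ξ` of equal action `A(xᵢ) − ν(ξᵢ)` would give
`A(xᵢ) − A(xⱼ) ∈ Γ`; so the maximum defining `A(ξ)` is attained at exactly one coordinate and all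
other coordinates have strictly smaller action. The action is non-Archimedean, so
`A(∑ λⱼ ξⱼ) ≤ maxⱼ A(λⱼ ξⱼ)`. If the leading generators are distinct, pick `j₀` maximising
`A(λⱼ ξⱼ)`: at the leading generator of `λ_{j₀} ξ_{j₀}` every other `λⱼ ξⱼ` has strictly smaller
action, so that leading coefficient survives in the sum and equality holds. If `ξ₁, ξ₂` share the
leading generator `x`, a monomial `λ = c T^d` with `d = ν(ξ₁ₓ) − ν(ξ₂ₓ) ∈ Γ` makes the leading terms
of `ξ₁` and `λ ξ₂` cancel, so `A(ξ₁ + λ ξ₂) < A(ξ₁) = A(λ ξ₂)`.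
-/

section Action

variable {F : Type*} [Field F] {ι : Type*} [Fintype ι]

/-- The action `A(x e) = a − ν(x)` of a multiple of a generator `e` with `A(e) = a`. -/
def coordAct (a : ℝ) (x : HahnSeries ℝ F) : WithBot ℝ :=
  if x = 0 then ⊥ else ((a - nu x : ℝ) : WithBot ℝ)

@[simp]
theorem coordAct_zero (a : ℝ) : coordAct a (0 : HahnSeries ℝ F) = ⊥ := if_pos rfl

theorem coordAct_of_ne_zero (a : ℝ) {x : HahnSeries ℝ F} (hx : x ≠ 0) :
    coordAct a x = ((a - nu x : ℝ) : WithBot ℝ) := if_neg hx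

theorem coordAct_le_coe_iff {a r : ℝ} {x : HahnSeries ℝ F} :
    coordAct a x ≤ r ↔ ∀ t < a - r, x.coeff t = 0 := by
  by_cases hx : x = 0
  · simp [hx]
  rw [coordAct_of_ne_zero a hx, WithBot.coe_le_coe]
  refine ⟨fun h t ht => HahnSeries.coeff_eq_zero_of_lt_order ?_, fun h => ?_⟩
  · unfold nu at h; linarith
  · by_contra! hlt
    exact hx (HahnSeries.coeff_order_eq_zero.mp (h _ (by unfold nu at hlt; linarith)))

theorem coordAct_lt_coe_iff {a r : ℝ} {x : HahnSeries ℝ F} :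
    coordAct a x < r ↔ ∀ t ≤ a - r, x.coeff t = 0 := by
  by_cases hx : x = 0
  · simp [hx]
  rw [coordAct_of_ne_zero a hx, WithBot.coe_lt_coe]
  refine ⟨fun h t ht => HahnSeries.coeff_eq_zero_of_lt_order ?_, fun h => ?_⟩
  · unfold nu at h; linarith
  · by_contra! hle
    exact hx (HahnSeries.coeff_order_eq_zero.mp (h _ (by unfold nu at hle; linarith)))

theorem coe_le_coordAct_of_coeff_ne_zero (a : ℝ) {x : HahnSeries ℝ F} {t : ℝ}
    (h : x.coeff t ≠ 0) : ((a - t : ℝ) : WithBot ℝ) ≤ coordAct a x := by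
  rw [coordAct_of_ne_zero a (HahnSeries.ne_zero_of_coeff_ne_zero h), WithBot.coe_le_coe]
  unfold nu
  linarith [HahnSeries.order_le_of_coeff_ne_zero h]

theorem coordAct_add_le (a : ℝ) (x y : HahnSeries ℝ F) :
    coordAct a (x + y) ≤ coordAct a x ⊔ coordAct a y := by
  by_cases hxy : x + y = 0
  · simp [hxy]
  by_cases hx : x = 0
  · simp [hx]
  by_cases hy : y = 0
  · simp [hy]
  have hmin := HahnSeries.min_order_le_order_add hxy
  simp only [coordAct_of_ne_zero a hxy, coordAct_of_ne_zero a hx, coordAct_of_ne_zero a hy,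
    ← WithBot.coe_sup, WithBot.coe_le_coe, nu]
  rcases min_choice x.order y.order with h | h <;> rw [h] at hmin
  · exact le_sup_of_le_left (by linarith)
  · exact le_sup_of_le_right (by linarith)

theorem coordAct_mul (a : ℝ) (l x : HahnSeries ℝ F) :
    coordAct a (l * x) = if l = 0 then ⊥ else WithBot.map (fun t => t - nu l) (coordAct a x) := by
  by_cases hl : l = 0
  · simp [hl]
  by_cases hx : x = 0
  · simp [hx]
  rw [if_neg hl, coordAct_of_ne_zero a hx, coordAct_of_ne_zero a (mul_ne_zero hl hx),
    WithBot.map_coe, nu, nu, nu, HahnSeries.order_mul hl hx]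
  congr 1
  ring

theorem act_eq_sup (Ax : ι → ℝ) (c : ι → HahnSeries ℝ F) :
    act Ax c = univ.sup fun i => coordAct (Ax i) (c i) := rfl

theorem coordAct_le_act (Ax : ι → ℝ) (c : ι → HahnSeries ℝ F) (i : ι) :
    coordAct (Ax i) (c i) ≤ act Ax c :=
  le_sup (f := fun i => coordAct (Ax i) (c i)) (mem_univ i)

theorem act_le_coe_iff {Ax : ι → ℝ} {c : ι → HahnSeries ℝ F} {r : ℝ} :
    act Ax c ≤ r ↔ ∀ i, ∀ t < Ax i - r, (c i).coeff t = 0 := by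
  simp only [act_eq_sup, Finset.sup_le_iff, mem_univ, true_implies, coordAct_le_coe_iff]

theorem act_lt_coe_iff {Ax : ι → ℝ} {c : ι → HahnSeries ℝ F} {r : ℝ} :
    act Ax c < r ↔ ∀ i, ∀ t ≤ Ax i - r, (c i).coeff t = 0 := by
  simp only [act_eq_sup, Finset.sup_lt_iff (WithBot.bot_lt_coe r), mem_univ, true_implies,
    coordAct_lt_coe_iff]

theorem coe_le_act_of_coeff_ne_zero (Ax : ι → ℝ) {c : ι → HahnSeries ℝ F} {i : ι} {t : ℝ}
    (h : (c i).coeff t ≠ 0) : ((Ax i - t : ℝ) : WithBot ℝ) ≤ act Ax c :=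
  (coe_le_coordAct_of_coeff_ne_zero (Ax i) h).trans (coordAct_le_act Ax c i)

@[simp]
theorem act_zero (Ax : ι → ℝ) : act Ax (0 : ι → HahnSeries ℝ F) = ⊥ := by
  simp [act_eq_sup]

theorem act_add_le (Ax : ι → ℝ) (c d : ι → HahnSeries ℝ F) :
    act Ax (c + d) ≤ act Ax c ⊔ act Ax d := by
  rw [act_eq_sup, act_eq_sup, act_eq_sup, ← Finset.sup_sup]
  exact Finset.sup_mono_fun fun i _ => coordAct_add_le (Ax i) (c i) (d i)

theorem act_sum_le (Ax : ι → ℝ) {κ : Type*} (s : Finset κ) (v : κ → ι → HahnSeries ℝ F) :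
    act Ax (∑ j ∈ s, v j) ≤ s.sup fun j => act Ax (v j) := by
  induction s using Finset.induction_on with
  | empty => simp
  | insert j s hj ih =>
    rw [sum_insert hj, sup_insert]
    exact (act_add_le Ax _ _).trans (sup_le_sup_left ih _)

theorem act_smul (Ax : ι → ℝ) (l : HahnSeries ℝ F) (c : ι → HahnSeries ℝ F) :
    act Ax (l • c) = scaledAct Ax l c := by
  by_cases hl : l = 0
  · simp [hl, scaledAct]
  have hmono : Monotone (WithBot.map fun t : ℝ => t - nu l) :=
    Monotone.withBot_map fun _ _ h => by simpa using h
  simp only [act_eq_sup, scaledAct, if_neg hl, Pi.smul_apply, smul_eq_mul, coordAct_mul]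
  exact (Finset.apply_sup_eq_sup_comp_of_linearOrder _ hmono rfl).symm

theorem isLeadIdx_iff {Ax : ι → ℝ} {ξ : ι → HahnSeries ℝ F} {i : ι} :
    IsLeadIdx Ax ξ i ↔ ξ i ≠ 0 ∧ act Ax ξ = coordAct (Ax i) (ξ i) :=
  and_congr_right fun h => by rw [coordAct_of_ne_zero _ h]

theorem exists_isLeadIdx (Ax : ι → ℝ) {ξ : ι → HahnSeries ℝ F} (hξ : ξ ≠ 0) :
    ∃ i, IsLeadIdx Ax ξ i := by
  obtain ⟨i₀, hi₀⟩ := Function.ne_iff.mp hξ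
  obtain ⟨i, -, hi⟩ := exists_mem_eq_sup univ ⟨i₀, mem_univ i₀⟩ fun i => coordAct (Ax i) (ξ i)
  refine ⟨i, isLeadIdx_iff.mpr ⟨fun h => ?_, hi⟩⟩
  have := coordAct_le_act Ax ξ i₀
  rw [act_eq_sup, hi, h, coordAct_zero, le_bot_iff, coordAct_of_ne_zero _ hi₀] at this
  exact WithBot.coe_ne_bot this

theorem IsLeadIdx.smul {Ax : ι → ℝ} {ξ : ι → HahnSeries ℝ F} {i : ι} (h : IsLeadIdx Ax ξ i)
    {l : HahnSeries ℝ F} (hl : l ≠ 0) : IsLeadIdx Ax (l • ξ) i := by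
  obtain ⟨hξi, hact⟩ := isLeadIdx_iff.mp h
  refine isLeadIdx_iff.mpr ⟨mul_ne_zero hl hξi, ?_⟩
  rw [act_smul, scaledAct, hact, Pi.smul_apply, smul_eq_mul, coordAct_mul, if_neg hl]

theorem act_le_act_sum_of_isLeadIdx {Ax : ι → ℝ} {κ : Type*} [Fintype κ]
    {v : κ → ι → HahnSeries ℝ F} {j₀ : κ} {i₀ : ι} (h₀ : IsLeadIdx Ax (v j₀) i₀)
    (hlt : ∀ j ≠ j₀, coordAct (Ax i₀) (v j i₀) < act Ax (v j₀)) :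
    act Ax (v j₀) ≤ act Ax (∑ j, v j) := by
  -- the leading coefficient of `v j₀` at `i₀` is not cancelled in the sum
  have hcoeff : ((∑ j, v j) i₀).coeff (nu (v j₀ i₀)) = (v j₀ i₀).coeff (nu (v j₀ i₀)) := by
    rw [Finset.sum_apply, HahnSeries.coeff_sum]
    refine Finset.sum_eq_single j₀ (fun j _ hj => ?_) (by simp)
    have hj := hlt j hj
    rw [h₀.2] at hj
    exact coordAct_lt_coe_iff.mp hj _ (by linarith)
  rw [h₀.2]
  exact coe_le_act_of_coeff_ne_zero Ax (hcoeff ▸ HahnSeries.coeff_order_eq_zero.not.mpr h₀.1)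

theorem InGamma.nu_mem {Γ : AddSubgroup ℝ} {x : HahnSeries ℝ F} (h : InGamma Γ x) (hx : x ≠ 0) :
    nu x ∈ Γ :=
  h (HahnSeries.coeff_order_eq_zero.not.mpr hx)

theorem InGamma.mul {Γ : AddSubgroup ℝ} {x y : HahnSeries ℝ F} (hx : InGamma Γ x)
    (hy : InGamma Γ y) : InGamma Γ (x * y) := by
  intro t ht
  obtain ⟨a, ha, b, hb, rfl⟩ := Set.mem_add.mp (HahnSeries.support_mul_subset ht)
  exact add_mem (hx ha) (hy hb)

theorem inGamma_single {Γ : AddSubgroup ℝ} {d : ℝ} (hd : d ∈ Γ) (c : F) :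
    InGamma Γ (HahnSeries.single d c) := by
  intro t ht
  rwa [Set.mem_singleton_iff.mp (HahnSeries.support_single_subset ht)]

section DistinctModGamma

variable {Γ : AddSubgroup ℝ} {Ax : ι → ℝ} {ξ : ι → HahnSeries ℝ F}

theorem IsLeadIdx.unique (hdist : ∀ i j : ι, i ≠ j → Ax i - Ax j ∉ Γ)
    (hΓ : ∀ i, InGamma Γ (ξ i)) {i j : ι} (hi : IsLeadIdx Ax ξ i) (hj : IsLeadIdx Ax ξ j) :
    i = j := by
  by_contra hne
  have heq : Ax i - nu (ξ i) = Ax j - nu (ξ j) := WithBot.coe_injective (hi.2.symm.trans hj.2)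
  refine hdist i j hne ?_
  rw [show Ax i - Ax j = nu (ξ i) - nu (ξ j) by linarith]
  exact sub_mem (InGamma.nu_mem (hΓ i) hi.1) (InGamma.nu_mem (hΓ j) hj.1)

theorem coordAct_lt_act_of_isLeadIdx (hdist : ∀ i j : ι, i ≠ j → Ax i - Ax j ∉ Γ)
    (hΓ : ∀ i, InGamma Γ (ξ i)) {i₀ i : ι} (h₀ : IsLeadIdx Ax ξ i₀) (hi : i ≠ i₀) :
    coordAct (Ax i) (ξ i) < act Ax ξ := by
  refine (coordAct_le_act Ax ξ i).lt_of_ne fun heq => hi (IsLeadIdx.unique hdist hΓ ?_ h₀)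
  have hξi : ξ i ≠ 0 := by
    rintro h
    rw [h, coordAct_zero, h₀.2] at heq
    exact WithBot.bot_ne_coe heq
  exact isLeadIdx_iff.mpr ⟨hξi, heq.symm⟩

theorem act_add_lt_of_isLeadIdx (hdist : ∀ i j : ι, i ≠ j → Ax i - Ax j ∉ Γ)
    {c d : ι → HahnSeries ℝ F} (hΓc : ∀ i, InGamma Γ (c i)) (hΓd : ∀ i, InGamma Γ (d i))
    {i₀ : ι} (hc : IsLeadIdx Ax c i₀) (hd : IsLeadIdx Ax d i₀) (hact : act Ax c = act Ax d)
    (hcancel : (c i₀ + d i₀).coeff (nu (c i₀)) = 0) :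
    act Ax (c + d) < act Ax c := by
  have hdr : act Ax d = ((Ax i₀ - nu (c i₀) : ℝ) : WithBot ℝ) := hact.symm.trans hc.2
  rw [hc.2, act_lt_coe_iff]
  intro i t ht
  rw [Pi.add_apply, HahnSeries.coeff_add]
  rcases eq_or_ne i i₀ with rfl | hi
  · rcases (show t ≤ nu (c i) by linarith).lt_or_eq with ht | rfl
    · rw [act_le_coe_iff.mp hc.2.le i t (by linarith), act_le_coe_iff.mp hdr.le i t (by linarith),
        add_zero]
    · rwa [← HahnSeries.coeff_add]
  · have hcl := coordAct_lt_act_of_isLeadIdx hdist hΓc hc hi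
    have hdl := coordAct_lt_act_of_isLeadIdx hdist hΓd hd hi
    rw [hc.2] at hcl
    rw [hdr] at hdl
    rw [coordAct_lt_coe_iff.mp hcl t ht, coordAct_lt_coe_iff.mp hdl t ht, add_zero]

theorem orthogonalGamma_of_injective (hdist : ∀ i j : ι, i ≠ j → Ax i - Ax j ∉ Γ)
    {κ : Type*} [Fintype κ] {ξ : κ → ι → HahnSeries ℝ F} (hΓ : ∀ j i, InGamma Γ (ξ j i))
    {lead : κ → ι} (hinj : Function.Injective lead) (hlead : ∀ j, IsLeadIdx Ax (ξ j) (lead j)) :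
    OrthogonalGamma Γ Ax ξ := by
  intro l hl
  simp only [← act_smul]
  refine le_antisymm (act_sum_le Ax (univ : Finset κ) _) (Finset.sup_le fun j _ => ?_)
  obtain ⟨j₀, -, hj₀⟩ := exists_max_image univ (fun j => act Ax (l j • ξ j)) ⟨j, mem_univ j⟩
  refine (hj₀ j (mem_univ j)).trans ?_
  by_cases hl₀ : l j₀ = 0
  · simp [hl₀]
  have hlead₀ := (hlead j₀).smul hl₀
  refine act_le_act_sum_of_isLeadIdx (v := fun j => l j • ξ j) hlead₀ fun j hj => ?_
  by_cases hlj : l j = 0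
  · rw [hlj, zero_smul, Pi.zero_apply, coordAct_zero, hlead₀.2]
    exact WithBot.bot_lt_coe _
  have hΓj : ∀ i, InGamma Γ ((l j • ξ j) i) := fun i => (hl j).mul (hΓ j i)
  exact (coordAct_lt_act_of_isLeadIdx hdist hΓj ((hlead j).smul hlj)
    fun h => hj (hinj h).symm).trans_le (hj₀ j (mem_univ j))

theorem exists_act_add_smul_lt_of_isLeadIdx (hdist : ∀ i j : ι, i ≠ j → Ax i - Ax j ∉ Γ)
    {c d : ι → HahnSeries ℝ F} (hΓc : ∀ i, InGamma Γ (c i)) (hΓd : ∀ i, InGamma Γ (d i))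
    {i₀ : ι} (hc : IsLeadIdx Ax c i₀) (hd : IsLeadIdx Ax d i₀) :
    ∃ y : HahnSeries ℝ F, InGamma Γ y ∧ act Ax (c + y • d) < act Ax c := by
  set a := (c i₀).coeff (nu (c i₀))
  set b := (d i₀).coeff (nu (d i₀))
  have ha : a ≠ 0 := HahnSeries.coeff_order_eq_zero.not.mpr hc.1
  have hb : b ≠ 0 := HahnSeries.coeff_order_eq_zero.not.mpr hd.1
  set e := nu (c i₀) - nu (d i₀)
  have heΓ : e ∈ Γ := sub_mem (InGamma.nu_mem (hΓc i₀) hc.1) (InGamma.nu_mem (hΓd i₀) hd.1)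
  -- `y • d` has the leading term `-a T^{ν(c i₀)}` at `i₀`, cancelling that of `c`
  set y : HahnSeries ℝ F := HahnSeries.single e (-(a / b))
  have hy : y ≠ 0 := HahnSeries.single_ne_zero (neg_ne_zero.mpr (div_ne_zero ha hb))
  have hyd : IsLeadIdx Ax (y • d) i₀ := hd.smul hy
  have hact : act Ax c = act Ax (y • d) := by
    rw [hc.2, hyd.2, Pi.smul_apply, smul_eq_mul]
    unfold nu
    rw [HahnSeries.order_mul hy hd.1, HahnSeries.order_single (neg_ne_zero.mpr (div_ne_zero ha hb))]
    congr 1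
    simp only [e, nu]
    ring
  have hcancel : (c i₀ + (y • d) i₀).coeff (nu (c i₀)) = 0 := by
    have hprod : (y * d i₀).coeff (nu (c i₀)) = -a := by
      rw [show nu (c i₀) = nu (d i₀) + e by ring, HahnSeries.coeff_single_mul_add]
      show -(a / b) * b = -a
      rw [neg_mul, div_mul_cancel₀ a hb]
    rw [HahnSeries.coeff_add, Pi.smul_apply, smul_eq_mul, hprod]
    exact add_neg_cancel a
  have hΓyd : ∀ i, InGamma Γ ((y • d) i) := fun i => (inGamma_single heΓ _).mul (hΓd i)
  exact ⟨y, inGamma_single heΓ _, act_add_lt_of_isLeadIdx hdist hΓc hΓyd hc hyd hact hcancel⟩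

theorem not_orthogonalGamma_of_isLeadIdx (hdist : ∀ i j : ι, i ≠ j → Ax i - Ax j ∉ Γ)
    {κ : Type*} [Fintype κ] {ξ : κ → ι → HahnSeries ℝ F} (hΓ : ∀ j i, InGamma Γ (ξ j i))
    {j₁ j₂ : κ} (hne : j₁ ≠ j₂) {i₀ : ι} (h₁ : IsLeadIdx Ax (ξ j₁) i₀)
    (h₂ : IsLeadIdx Ax (ξ j₂) i₀) :
    ¬ OrthogonalGamma Γ Ax ξ := by
  intro hort
  obtain ⟨y, hyΓ, hlt⟩ := exists_act_add_smul_lt_of_isLeadIdx hdist (hΓ j₁) (hΓ j₂) h₁ h₂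
  let l : κ → HahnSeries ℝ F := fun j => if j = j₁ then 1 else if j = j₂ then y else 0
  have hl : ∀ j, InGamma Γ (l j) := by
    intro j
    dsimp only [l]
    split_ifs
    · simpa using inGamma_single (zero_mem Γ) (1 : F)
    · exact hyΓ
    · intro t ht
      simp at ht
  have hsum : ∑ j, l j • ξ j = ξ j₁ + y • ξ j₂ := by
    rw [Fintype.sum_eq_add j₁ j₂ hne fun j hj => by simp [l, hj.1, hj.2]]
    simp [l, hne.symm]
  have hle : act Ax (ξ j₁) ≤ univ.sup fun j => scaledAct Ax (l j) (ξ j) := by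
    refine le_of_eq_of_le ?_ (le_sup (f := fun j => scaledAct Ax (l j) (ξ j)) (mem_univ j₁))
    simp [← act_smul, l]
  rw [← hsum, hort l hl] at hlt
  exact hlt.not_ge hle

end DistinctModGamma

end Action

/-- If the actions `A(xᵢ)` of the generators are pairwise distinct modulo `Γ`, then every
nonzero `ξ ∈ C` with coefficients in `Λ^Γ` has a unique leading action term; and a finite
family of such nonzero vectors is orthogonal if and only if their leading generators are
pairwise distinct. -/
theorem leading_term_unique_and_orthogonal_iff
    {F : Type*} [Field F] {ι : Type*} [Fintype ι] {m : ℕ}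
    (Γ : AddSubgroup ℝ) (Ax : ι → ℝ)
    (hdist : ∀ i j : ι, i ≠ j → Ax i - Ax j ∉ Γ) :
    (∀ ξ : ι → HahnSeries ℝ F, ξ ≠ 0 → (∀ i, InGamma Γ (ξ i)) →
        ∃! i : ι, IsLeadIdx Ax ξ i) ∧
    (∀ ξ : Fin m → ι → HahnSeries ℝ F, (∀ j, ξ j ≠ 0) →
        (∀ j i, InGamma Γ (ξ j i)) →
        (OrthogonalGamma Γ Ax ξ ↔
          ∃ lead : Fin m → ι, Function.Injective lead ∧
            ∀ j, IsLeadIdx Ax (ξ j) (lead j))) := by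
  refine ⟨fun ξ hξ hΓ => ?_, fun ξ hξ hΓ => ⟨fun hort => ?_, ?_⟩⟩
  · obtain ⟨i, hi⟩ := exists_isLeadIdx Ax hξ
    exact ⟨i, hi, fun j hj => hj.unique hdist hΓ hi⟩
  · choose lead hlead using fun j => exists_isLeadIdx Ax (hξ j)
    refine ⟨lead, fun j₁ j₂ h => ?_, hlead⟩
    by_contra hne
    exact not_orthogonalGamma_of_isLeadIdx hdist hΓ hne (hlead j₁) (h ▸ hlead j₂) hort
  · rintro ⟨lead, hinj, hlead⟩
    exact orthogonalGamma_of_injective hdist hΓ hinj hlead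

end
end

section
/- Let (C, ∂, A) be a finite-dimensional filtered Floer-type complex over Λ, and suppose W ⊆ im ∂ is an ε-robust subspace, i.e., every nonzero ζ ∈ W satisfies A(ξ) − A(ζ) > ε for all ξ with ∂ξ = ζ. Then the number of finite bars of length greater than ε in the barcode of C is at least dim_Λ W. -/
open Finset Classical
noncomputable section

/-- Orthogonality of a finite family: `A(∑ λᵢ ξᵢ) = maxᵢ (A(ξᵢ) − ν(λᵢ))`. -/
def Orthogonal {F : Type*} [Field F] {ι : Type*} [Fintype ι] {κ : Type*} [Fintype κ]
    (Ax : ι → ℝ) (ξ : κ → ι → HahnSeries ℝ F) : Prop :=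
  ∀ l : κ → HahnSeries ℝ F,
    act Ax (∑ j, l j • ξ j) = Finset.univ.sup fun j => scaledAct Ax (l j) (ξ j)

/-- The differential `∂` is strictly action-decreasing. -/
def StrictlyActionDecreasing {F : Type*} [Field F] {ι : Type*} [Fintype ι]
    (Ax : ι → ℝ)
    (D : (ι → HahnSeries ℝ F) →ₗ[HahnSeries ℝ F] (ι → HahnSeries ℝ F)) : Prop :=
  ∀ c : ι → HahnSeries ℝ F, c ≠ 0 → act Ax (D c) < act Ax c

/-- A generator `xᵢ` is `ε`-isolated: every nonzero term `f T^a` of a matrix coefficient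
`λ_{ij}` of `∂` from or to `xᵢ` gives an arrow of length (action difference)
`A(xᵢ) − A(xⱼ) + a > ε`. -/
def EpsIsolated {F : Type*} [Field F] {ι : Type*} [Fintype ι]
    (Ax : ι → ℝ)
    (D : (ι → HahnSeries ℝ F) →ₗ[HahnSeries ℝ F] (ι → HahnSeries ℝ F))
    (ε : ℝ) (i : ι) : Prop :=
  (∀ j : ι, ∀ a ∈ (D (Pi.single i 1) j).support, ε < Ax i - Ax j + a) ∧
  (∀ j : ι, ∀ a ∈ (D (Pi.single j 1) i).support, ε < Ax j - Ax i + a)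

/-- A singular decomposition of the filtered complex `(C, ∂, A)`: an orthogonal basis
`{αᵢ, ηⱼ, γⱼ}` with `∂αᵢ = 0` and `∂γⱼ = ηⱼ`.  The finite bars of the barcode are the
action differences `A(γⱼ) − A(ηⱼ)`, and there are `nI = dim_Λ H(C)` infinite bars. -/
structure SingularDecomposition {F : Type*} [Field F] {ι : Type*} [Fintype ι]
    (Ax : ι → ℝ)
    (D : (ι → HahnSeries ℝ F) →ₗ[HahnSeries ℝ F] (ι → HahnSeries ℝ F)) where
  nI : ℕ
  nF : ℕ
  alpha : Fin nI → ι → HahnSeries ℝ F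
  eta : Fin nF → ι → HahnSeries ℝ F
  gamma : Fin nF → ι → HahnSeries ℝ F
  indep : LinearIndependent (HahnSeries ℝ F) (Sum.elim alpha (Sum.elim eta gamma))
  spans : ⊤ ≤ Submodule.span (HahnSeries ℝ F)
      (Set.range (Sum.elim alpha (Sum.elim eta gamma)))
  orth : Orthogonal Ax (Sum.elim alpha (Sum.elim eta gamma))
  d_alpha : ∀ j, D (alpha j) = 0
  d_gamma : ∀ j, D (gamma j) = eta j

/-- The number of bars of length `> ε`: all `nI` infinite bars together with the finite
bars `A(γⱼ) − A(ηⱼ) > ε`. -/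
noncomputable def barCount {F : Type*} [Field F] {ι : Type*} [Fintype ι]
    {Ax : ι → ℝ} {D : (ι → HahnSeries ℝ F) →ₗ[HahnSeries ℝ F] (ι → HahnSeries ℝ F)}
    (SD : SingularDecomposition Ax D) (ε : ℝ) : ℕ :=
  SD.nI + Nat.card {j : Fin SD.nF |
    act Ax (SD.eta j) + ((ε : ℝ) : WithBot ℝ) < act Ax (SD.gamma j)}

/-! Map `W` to the `η`-coordinates along the bars longer than `ε`. If `ζ = ∂ξ₀ ∈ W` lies in the
kernel, write `ζ = ∑ λⱼ ηⱼ` (the `λⱼ` are the `γ`-coordinates of `ξ₀`, since `∂αᵢ = ∂ηⱼ = 0`); then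
`λⱼ = 0` on every long bar, and by orthogonality `ξ = ∑ λⱼ γⱼ` is a primitive of `ζ` with
`A(ξ) ≤ A(ζ) + ε`, which robustness forbids unless `ζ = 0`. So the map is injective on `W`. -/

theorem WithBot.map_sub_le_add {α : Type*} [AddCommGroup α] [LinearOrder α]
    [IsOrderedAddMonoid α] {a b : WithBot α} {t ε : α} (h : a ≤ b + (ε : WithBot α)) :
    WithBot.map (· - t) a ≤ WithBot.map (· - t) b + (ε : WithBot α) := by
  induction a using WithBot.recBotCoe with
  | bot => exact bot_le
  | coe x =>
    induction b using WithBot.recBotCoe with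
    | bot => simp at h
    | coe y =>
      rw [← WithBot.coe_add, WithBot.coe_le_coe] at h
      simp only [WithBot.map_coe, ← WithBot.coe_add, WithBot.coe_le_coe, sub_add_eq_add_sub]
      exact sub_le_sub_right h t

section Orthogonal

variable {F : Type*} [Field F] {ι : Type*} [Fintype ι] {Ax : ι → ℝ}

theorem scaledAct_le_add {u v : ι → HahnSeries ℝ F} {ε : ℝ}
    (h : act Ax u ≤ act Ax v + (ε : WithBot ℝ)) (l : HahnSeries ℝ F) :
    scaledAct Ax l u ≤ scaledAct Ax l v + (ε : WithBot ℝ) := by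
  unfold scaledAct
  split_ifs
  · exact bot_le
  · exact WithBot.map_sub_le_add h

@[simp]
theorem scaledAct_zero (v : ι → HahnSeries ℝ F) : scaledAct Ax 0 v = ⊥ := if_pos rfl

variable {κ κ' : Type*} [Fintype κ] [Fintype κ']

theorem Orthogonal.comp_inl {ξ : κ ⊕ κ' → ι → HahnSeries ℝ F} (h : Orthogonal Ax ξ) :
    Orthogonal Ax (ξ ∘ Sum.inl) := fun l => by
  simpa [Fintype.sum_sum_type, ← univ_disjSum_univ, sup_disjSum] using h (Sum.elim l 0)

theorem Orthogonal.comp_inr {ξ : κ ⊕ κ' → ι → HahnSeries ℝ F} (h : Orthogonal Ax ξ) :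
    Orthogonal Ax (ξ ∘ Sum.inr) := fun l => by
  simpa [Fintype.sum_sum_type, ← univ_disjSum_univ, sup_disjSum] using h (Sum.elim 0 l)

end Orthogonal

namespace SingularDecomposition

variable {F : Type*} [Field F] {ι : Type*} [Fintype ι] {Ax : ι → ℝ}
  {D : (ι → HahnSeries ℝ F) →ₗ[HahnSeries ℝ F] (ι → HahnSeries ℝ F)}
  (SD : SingularDecomposition Ax D)

def basis : Module.Basis (Fin SD.nI ⊕ (Fin SD.nF ⊕ Fin SD.nF)) (HahnSeries ℝ F)
    (ι → HahnSeries ℝ F) :=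
  Module.Basis.mk SD.indep SD.spans

@[simp]
theorem basis_inl (i : Fin SD.nI) : SD.basis (Sum.inl i) = SD.alpha i :=
  Module.Basis.mk_apply _ _ _

@[simp]
theorem basis_inr_inl (j : Fin SD.nF) : SD.basis (Sum.inr (Sum.inl j)) = SD.eta j :=
  Module.Basis.mk_apply _ _ _

@[simp]
theorem basis_inr_inr (j : Fin SD.nF) : SD.basis (Sum.inr (Sum.inr j)) = SD.gamma j :=
  Module.Basis.mk_apply _ _ _

theorem orthogonal_eta : Orthogonal Ax SD.eta := SD.orth.comp_inr.comp_inl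

theorem orthogonal_gamma : Orthogonal Ax SD.gamma := SD.orth.comp_inr.comp_inr

theorem D_eta_eq_zero (hD2 : ∀ c, D (D c) = 0) (j : Fin SD.nF) : D (SD.eta j) = 0 := by
  rw [← SD.d_gamma]
  exact hD2 _

theorem D_eq_sum_smul_eta (hD2 : ∀ c, D (D c) = 0) (ξ : ι → HahnSeries ℝ F) :
    D ξ = ∑ j, SD.basis.repr ξ (Sum.inr (Sum.inr j)) • SD.eta j := by
  calc D ξ = D (∑ k, SD.basis.repr ξ k • SD.basis k) := by rw [SD.basis.sum_repr]
    _ = _ := by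
      rw [map_sum, Fintype.sum_sum_type, Fintype.sum_sum_type]
      simp only [map_smul, basis_inl, basis_inr_inl, basis_inr_inr, SD.d_alpha, SD.D_eta_eq_zero hD2,
        SD.d_gamma, smul_zero, sum_const_zero, zero_add]

theorem basis_repr_sum_smul_eta (l : Fin SD.nF → HahnSeries ℝ F) (j : Fin SD.nF) :
    SD.basis.repr (∑ k, l k • SD.eta k) (Sum.inr (Sum.inl j)) = l j := by
  simp_rw [map_sum, map_smul, ← SD.basis_inr_inl, SD.basis.repr_self, Finsupp.finsetSum_apply,
    Finsupp.smul_apply, Finsupp.single_apply]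
  simp

theorem act_sum_smul_gamma_le {ε : ℝ} {l : Fin SD.nF → HahnSeries ℝ F}
    (hl : ∀ j, l j ≠ 0 → act Ax (SD.gamma j) ≤ act Ax (SD.eta j) + (ε : WithBot ℝ)) :
    act Ax (∑ j, l j • SD.gamma j) ≤ act Ax (∑ j, l j • SD.eta j) + (ε : WithBot ℝ) := by
  rw [SD.orthogonal_gamma, SD.orthogonal_eta]
  refine Finset.sup_le fun j _ => ?_
  by_cases hlj : l j = 0
  · simp [hlj]
  · exact (scaledAct_le_add (hl j hlj) _).trans
      (add_le_add_left (Finset.le_sup (f := fun j => scaledAct Ax (l j) (SD.eta j))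
        (Finset.mem_univ j)) _)

def longBars (ε : ℝ) : Set (Fin SD.nF) :=
  {j | act Ax (SD.eta j) + (ε : WithBot ℝ) < act Ax (SD.gamma j)}

def longBarCoords (ε : ℝ) :
    (ι → HahnSeries ℝ F) →ₗ[HahnSeries ℝ F] (SD.longBars ε → HahnSeries ℝ F) :=
  LinearMap.pi fun j => Finsupp.lapply (Sum.inr (Sum.inl j.1)) ∘ₗ SD.basis.repr.toLinearMap

theorem longBarCoords_apply (ε : ℝ) (ζ : ι → HahnSeries ℝ F) (j : SD.longBars ε) :
    SD.longBarCoords ε ζ j = SD.basis.repr ζ (Sum.inr (Sum.inl j.1)) :=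
  rfl

theorem exists_primitive_act_le_of_longBarCoords_eq_zero (hD2 : ∀ c, D (D c) = 0) {ε : ℝ}
    {ζ : ι → HahnSeries ℝ F} (hζ : ζ ∈ LinearMap.range D) (h : SD.longBarCoords ε ζ = 0) :
    ∃ ξ, D ξ = ζ ∧ act Ax ξ ≤ act Ax ζ + (ε : WithBot ℝ) := by
  obtain ⟨ξ₀, rfl⟩ := hζ
  set l := fun j => SD.basis.repr ξ₀ (Sum.inr (Sum.inr j))
  have hD : D ξ₀ = ∑ j, l j • SD.eta j := SD.D_eq_sum_smul_eta hD2 ξ₀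
  refine ⟨∑ j, l j • SD.gamma j, by simp [SD.d_gamma, hD], ?_⟩
  rw [hD]
  refine SD.act_sum_smul_gamma_le fun j hlj => not_lt.mp fun hj => hlj ?_
  have := congrFun h ⟨j, hj⟩
  rwa [longBarCoords_apply, hD, basis_repr_sum_smul_eta] at this

end SingularDecomposition

theorem finite_bars_ge_dim_robust_general {F : Type*} [Field F] {ι : Type*} [Fintype ι]
    (Ax : ι → ℝ) (D : (ι → HahnSeries ℝ F) →ₗ[HahnSeries ℝ F] (ι → HahnSeries ℝ F))
    (hD2 : ∀ c, D (D c) = 0)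
    (SD : SingularDecomposition Ax D) (ε : ℝ)
    (W : Submodule (HahnSeries ℝ F) (ι → HahnSeries ℝ F))
    (hW : W ≤ LinearMap.range D)
    (hrobust : ∀ ζ ∈ W, ζ ≠ 0 → ∀ ξ, D ξ = ζ →
      act Ax ζ + ((ε : ℝ) : WithBot ℝ) < act Ax ξ) :
    Module.finrank (HahnSeries ℝ F) W ≤
      Nat.card {j : Fin SD.nF |
        act Ax (SD.eta j) + ((ε : ℝ) : WithBot ℝ) < act Ax (SD.gamma j)} := by
  have hinj : Function.Injective (SD.longBarCoords ε ∘ₗ W.subtype) := by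
    rw [← LinearMap.ker_eq_bot, LinearMap.ker_eq_bot']
    intro w hw
    by_contra hw0
    obtain ⟨ξ, hDξ, hle⟩ :=
      SD.exists_primitive_act_le_of_longBarCoords_eq_zero hD2 (hW w.2) hw
    exact (hrobust w w.2 (by simpa using hw0) ξ hDξ).not_ge hle
  have := LinearMap.finrank_le_finrank_of_injective hinj
  rwa [Module.finrank_pi, ← Nat.card_eq_fintype_card] at this

/-- If `W ⊆ im ∂` is an `ε`-robust subspace of a finite-dimensional filtered Floer-type
complex `(C, ∂, A)` over the Novikov field — i.e. every nonzero `ζ ∈ W` satisfies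
`A(ξ) − A(ζ) > ε` for all `ξ` with `∂ξ = ζ` — then the number of finite bars of length
greater than `ε` in the barcode of `C` is at least `dim_Λ W`. -/
theorem finite_bars_ge_dim_robust {F : Type*} [Field F] {ι : Type*} [Fintype ι]
    (Ax : ι → ℝ) (D : (ι → HahnSeries ℝ F) →ₗ[HahnSeries ℝ F] (ι → HahnSeries ℝ F))
    (hD2 : ∀ c, D (D c) = 0) (hdec : StrictlyActionDecreasing Ax D)
    (SD : SingularDecomposition Ax D) (ε : ℝ) (hε : 0 < ε)
    (W : Submodule (HahnSeries ℝ F) (ι → HahnSeries ℝ F))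
    (hW : W ≤ LinearMap.range D)
    (hrobust : ∀ ζ ∈ W, ζ ≠ 0 → ∀ ξ, D ξ = ζ →
      act Ax ζ + ((ε : ℝ) : WithBot ℝ) < act Ax ξ) :
    Module.finrank (HahnSeries ℝ F) W ≤
      Nat.card {j : Fin SD.nF |
        act Ax (SD.eta j) + ((ε : ℝ) : WithBot ℝ) < act Ax (SD.gamma j)} :=
  finite_bars_ge_dim_robust_general Ax D hD2 SD ε W hW hrobust

end
end

section
/- In a finite-dimensional filtered complex (C, ∂, A) over Λ, suppose w_1, …, w_m are orthogonal vectors of the form w_j = x_j + (lower action terms) with the x_j distinct ε-isolated generators. Then any nonzero exact linear combination ζ = ∂ξ' ∈ span(w_1,…,w_m) ∩ im ∂ is ε-robust: A(ξ) − A(ζ) > ε for every ξ with ∂ξ = ζ. -/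
open Finset Classical
noncomputable section

/-
By orthogonality the action of `ζ = ∑ λⱼ wⱼ` is attained at some `A(xⱼ) − ν(λⱼ)`. The other `wₖ`
reach `xⱼ` only through terms of lower action, so the `xⱼ`-coefficient of `ζ` has valuation exactly
`ν(λⱼ)`, i.e. `A(ζ) = A(xⱼ) − ν(ζ_{xⱼ})`. If `∂ξ = ζ`, then `ζ_{xⱼ} = ∑ᵢ ξᵢ ∂_{i,xⱼ}`, and some term
has valuation at most `ν(ζ_{xⱼ})`; as every arrow into `xⱼ` is longer than `ε`, the generator `xᵢ`
of that term contributes more than `A(ζ) + ε` to the action of `ξ`.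
-/

section Valuation

variable {F : Type*} [Field F]

lemma addVal_eq_nu {a : HahnSeries ℝ F} (ha : a ≠ 0) : HahnSeries.addVal ℝ F a = nu a :=
  HahnSeries.addVal_apply_of_ne ha

lemma nu_mul {a b : HahnSeries ℝ F} (ha : a ≠ 0) (hb : b ≠ 0) : nu (a * b) = nu a + nu b :=
  HahnSeries.order_mul ha hb

lemma nu_lt_addVal {a b : HahnSeries ℝ F} (h : b ≠ 0 → nu a < nu b) :
    (nu a : WithTop ℝ) < HahnSeries.addVal ℝ F b := by
  by_cases hb : b = 0
  · simp [hb]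
  · rw [addVal_eq_nu hb]
    exact WithTop.coe_lt_coe.2 (h hb)

lemma add_ne_zero_and_nu_add_eq {a b : HahnSeries ℝ F} (ha : a ≠ 0)
    (h : (nu a : WithTop ℝ) < HahnSeries.addVal ℝ F b) : a + b ≠ 0 ∧ nu (a + b) = nu a := by
  have hab : HahnSeries.addVal ℝ F (a + b) = nu a := by
    rw [AddValuation.map_add_eq_of_lt_left _ ((addVal_eq_nu ha).trans_lt h), addVal_eq_nu ha]
  have hne : a + b ≠ 0 := by
    rintro h0
    simp [h0] at hab
  exact ⟨hne, WithTop.coe_injective (by rw [← addVal_eq_nu hne, hab])⟩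

lemma exists_nu_le_nu_sum {κ : Type*} {s : Finset κ} {f : κ → HahnSeries ℝ F}
    (h : ∑ k ∈ s, f k ≠ 0) : ∃ k ∈ s, f k ≠ 0 ∧ nu (f k) ≤ nu (∑ k ∈ s, f k) := by
  by_contra! hlt
  have := AddValuation.map_lt_sum (HahnSeries.addVal ℝ F) WithTop.coe_ne_top
    fun k hk => nu_lt_addVal (hlt k hk)
  rw [addVal_eq_nu h] at this
  exact lt_irrefl _ this

end Valuation

section Action

variable {F : Type*} [Field F] {ι : Type*} [Fintype ι] {Ax : ι → ℝ}

lemma le_act {c : ι → HahnSeries ℝ F} {i : ι} (h : c i ≠ 0) :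
    ((Ax i - nu (c i) : ℝ) : WithBot ℝ) ≤ act Ax c := by
  refine le_trans ?_ (Finset.le_sup (Finset.mem_univ i))
  rw [if_neg h]

lemma act_le_iff {c : ι → HahnSeries ℝ F} {v : WithBot ℝ} :
    act Ax c ≤ v ↔ ∀ i, c i ≠ 0 → ((Ax i - nu (c i) : ℝ) : WithBot ℝ) ≤ v := by
  simp only [act, Finset.sup_le_iff, Finset.mem_univ, true_implies]
  refine forall_congr' fun i => ?_
  split_ifs with hi <;> simp [hi]

lemma act_single_add {i : ι} {r : ι → HahnSeries ℝ F} (hr : act Ax r < (Ax i : WithBot ℝ)) :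
    act Ax (Pi.single i 1 + r) = Ax i := by
  have hcoeff : (1 : HahnSeries ℝ F) + r i ≠ 0 ∧ nu (1 + r i) = 0 := by
    rw [← HahnSeries.order_one (Γ := ℝ) (R := F)]
    refine add_ne_zero_and_nu_add_eq one_ne_zero (nu_lt_addVal fun hri => ?_)
    have := WithBot.coe_lt_coe.1 ((le_act hri).trans_lt hr)
    rw [nu, HahnSeries.order_one]
    linarith
  apply le_antisymm
  · rw [act_le_iff]
    intro k hk
    rcases eq_or_ne k i with rfl | hki
    · simp [hcoeff.2]
    · simp only [Pi.add_apply, Pi.single_eq_of_ne hki, zero_add] at hk ⊢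
      exact (le_act hk).trans hr.le
  · have hi : (Pi.single i 1 + r : ι → HahnSeries ℝ F) i = 1 + r i := by simp
    have := le_act (Ax := Ax) (c := Pi.single i 1 + r) (i := i) (hi ▸ hcoeff.1)
    rwa [hi, hcoeff.2, sub_zero] at this

lemma Orthogonal.exists_act_sum_eq {κ : Type*} [Fintype κ] {w : κ → ι → HahnSeries ℝ F}
    (horth : Orthogonal Ax w) {a : κ → ℝ} (hw : ∀ k, act Ax (w k) = a k)
    {l : κ → HahnSeries ℝ F} (hl : ∑ k, l k • w k ≠ 0) :
    ∃ j, l j ≠ 0 ∧ act Ax (∑ k, l k • w k) = ((a j - nu (l j) : ℝ) : WithBot ℝ) ∧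
      ∀ k, l k ≠ 0 → a k - nu (l k) ≤ a j - nu (l j) := by
  have hscaled : ∀ k, l k ≠ 0 → scaledAct Ax (l k) (w k) = ((a k - nu (l k) : ℝ) : WithBot ℝ) := by
    intro k hk
    rw [scaledAct, if_neg hk, hw k, WithBot.map_coe]
  obtain ⟨i, hi⟩ := Function.ne_iff.1 hl
  have hbot : act Ax (∑ k, l k • w k) ≠ ⊥ := ne_bot_of_le_ne_bot WithBot.coe_ne_bot (le_act hi)
  rw [horth l] at hbot ⊢
  have hne : (Finset.univ : Finset κ).Nonempty :=
    Finset.nonempty_iff_ne_empty.2 fun h => hbot (by rw [h, Finset.sup_empty])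
  obtain ⟨j, -, hj⟩ := Finset.exists_mem_eq_sup _ hne fun k => scaledAct Ax (l k) (w k)
  have hlj : l j ≠ 0 := by
    intro h0
    rw [hj, scaledAct, if_pos h0] at hbot
    exact hbot rfl
  refine ⟨j, hlj, by rw [hj, hscaled j hlj], fun k hk => ?_⟩
  have := Finset.le_sup (f := fun k => scaledAct Ax (l k) (w k)) (Finset.mem_univ k)
  rwa [hj, hscaled j hlj, hscaled k hk, WithBot.coe_le_coe] at this

lemma nu_sum_smul_apply_eq_of_leading {κ : Type*} [Fintype κ] {x : κ → ι}
    (hx : Function.Injective x) {w r : κ → ι → HahnSeries ℝ F}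
    (hw : ∀ k, w k = Pi.single (x k) 1 + r k) (hr : ∀ k, act Ax (r k) < (Ax (x k) : WithBot ℝ))
    {l : κ → HahnSeries ℝ F} {j : κ} (hlj : l j ≠ 0)
    (hmax : ∀ k, l k ≠ 0 → Ax (x k) - nu (l k) ≤ Ax (x j) - nu (l j)) :
    (∑ k, l k • w k) (x j) ≠ 0 ∧ nu ((∑ k, l k • w k) (x j)) = nu (l j) := by
  have hcoeff : (∑ k, l k • w k) (x j) = l j + ∑ k, l k * r k (x j) := by
    simp [hw, Finset.sum_add_distrib, Pi.single_apply, hx.eq_iff]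
  rw [hcoeff]
  refine add_ne_zero_and_nu_add_eq hlj
    (AddValuation.map_lt_sum _ WithTop.coe_ne_top fun k _ => nu_lt_addVal fun hk => ?_)
  have hlk := left_ne_zero_of_mul hk
  have hrk := right_ne_zero_of_mul hk
  have hlow := WithBot.coe_lt_coe.1 ((le_act hrk).trans_lt (hr k))
  rw [nu_mul hlk hrk]
  linarith [hmax k hlk]

lemma lt_act_of_incoming_arrows_gt
    {D : (ι → HahnSeries ℝ F) →ₗ[HahnSeries ℝ F] (ι → HahnSeries ℝ F)} {ε : ℝ} {i : ι}
    (harrow : ∀ k, ∀ a ∈ (D (Pi.single k 1) i).support, ε < Ax k - Ax i + a)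
    {ξ : ι → HahnSeries ℝ F} (hξ : D ξ i ≠ 0) :
    ((Ax i - nu (D ξ i) + ε : ℝ) : WithBot ℝ) < act Ax ξ := by
  have hexp : D ξ i = ∑ k, ξ k * D (Pi.single k 1) i := by
    have hsingle : ∀ k, Pi.single k (ξ k) = ξ k • Pi.single k (1 : HahnSeries ℝ F) := fun k => by
      rw [← Pi.single_smul', smul_eq_mul, mul_one]
    conv_lhs => rw [← Finset.univ_sum_single ξ]
    simp [hsingle]
  obtain ⟨k, -, hk, hle⟩ := exists_nu_le_nu_sum (hexp ▸ hξ)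
  have hξk := left_ne_zero_of_mul hk
  have hDk := right_ne_zero_of_mul hk
  have harr := harrow k _ (HahnSeries.coeff_order_eq_zero.not.mpr hDk)
  rw [← hexp, nu_mul hξk hDk] at hle
  refine lt_of_lt_of_le (WithBot.coe_lt_coe.2 ?_) (le_act hξk)
  unfold nu at *
  linarith

end Action

theorem span_exact_robust_general {F : Type*} [Field F] {ι : Type*} [Fintype ι] {m : ℕ}
    (Ax : ι → ℝ)
    (D : (ι → HahnSeries ℝ F) →ₗ[HahnSeries ℝ F] (ι → HahnSeries ℝ F))
    (ε : ℝ) (x : Fin m → ι) (hx : Function.Injective x)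
    (hiso : ∀ j, EpsIsolated Ax D ε (x j))
    (w : Fin m → ι → HahnSeries ℝ F)
    (hw : ∀ j, ∃ r : ι → HahnSeries ℝ F,
      w j = Pi.single (x j) 1 + r ∧ act Ax r < ((Ax (x j) : ℝ) : WithBot ℝ))
    (horth : Orthogonal Ax w) :
    ∀ ζ ∈ Submodule.span (HahnSeries ℝ F) (Set.range w), ζ ∈ LinearMap.range D →
      ζ ≠ 0 → ∀ ξ, D ξ = ζ → act Ax ζ + ((ε : ℝ) : WithBot ℝ) < act Ax ξ := by
  intro ζ hζ _ hζ0 ξ hξ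
  obtain ⟨l, rfl⟩ := (Submodule.mem_span_range_iff_exists_fun _).1 hζ
  choose r hwr hr using hw
  have hact : ∀ k, act Ax (w k) = Ax (x k) := fun k => hwr k ▸ act_single_add (hr k)
  obtain ⟨j, hlj, hζact, hmax⟩ := horth.exists_act_sum_eq hact hζ0
  obtain ⟨hne, hnu⟩ := nu_sum_smul_apply_eq_of_leading hx hwr hr hlj hmax
  rw [← hξ] at hne hnu
  calc act Ax (∑ k, l k • w k) + (ε : WithBot ℝ)
      = ((Ax (x j) - nu (D ξ (x j)) + ε : ℝ) : WithBot ℝ) := by rw [hζact, hnu]; rfl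
    _ < act Ax ξ := lt_act_of_incoming_arrows_gt (hiso j).2 hne

/-- Observation (ii): if `w₁, …, w_m` are orthogonal vectors of the form
`wⱼ = x_{jⱼ} + (lower action terms)` with distinct `ε`-isolated leading generators, then
every nonzero exact vector in their span is `ε`-robust: `A(ξ) − A(ζ) > ε` whenever
`∂ξ = ζ`. -/
theorem span_exact_robust {F : Type*} [Field F] {ι : Type*} [Fintype ι] {m : ℕ}
    (Γ : AddSubgroup ℝ) (Ax : ι → ℝ)
    (D : (ι → HahnSeries ℝ F) →ₗ[HahnSeries ℝ F] (ι → HahnSeries ℝ F))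
    (hD2 : ∀ c, D (D c) = 0) (hdec : StrictlyActionDecreasing Ax D)
    -- the generators have pairwise distinct actions modulo `Γ` and `∂` has
    -- matrix coefficients in `Λ^Γ`:
    (hdist : ∀ i j : ι, i ≠ j → Ax i - Ax j ∉ Γ)
    (hDsupp : ∀ i j : ι, (D (Pi.single i 1) j).support ⊆ (Γ : Set ℝ))
    (ε : ℝ) (x : Fin m → ι) (hx : Function.Injective x)
    (hiso : ∀ j, EpsIsolated Ax D ε (x j))
    (w : Fin m → ι → HahnSeries ℝ F)
    (hw : ∀ j, ∃ r : ι → HahnSeries ℝ F,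
      w j = Pi.single (x j) 1 + r ∧ act Ax r < ((Ax (x j) : ℝ) : WithBot ℝ))
    (horth : Orthogonal Ax w) :
    ∀ ζ ∈ Submodule.span (HahnSeries ℝ F) (Set.range w), ζ ∈ LinearMap.range D →
      ζ ≠ 0 → ∀ ξ, D ξ = ζ → act Ax ζ + ((ε : ℝ) : WithBot ℝ) < act Ax ξ :=
  span_exact_robust_general Ax D ε x hx hiso w hw horth

end
end
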